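/- arXiv:2411.07857 — 3 statements merged into one kernel-verified Lean document; each statement's English description precedes it below -/
import Mathlib

section
/- Let k be a finite field and let G ≤ GL₂(k) be a subgroup. Then the following are equivalent: (1) G contains SL₂(k); (2) the image PG of G in PGL₂(k) contains PSL₂(k); (3) G = GL₂(k)_A where A = det(G) is the image of G under the determinant map. -/
/-!
Condition (2) says `SL₂(k) ≤ G ⊔ Z` with `Z` the centre of `GL₂(k)`, and (3) says
`G = G ⊔ ker det`, so everything reduces to showing that `SL₂(k) ≤ G ⊔ Z` forces `SL₂(k) ≤ G`.
Central factors cancel in commutators, so all commutators of elements of `SL₂(k)` lie in `G`.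
If some `a ∈ kˣ` has `a² ≠ 1`, commuting `diag(a, a⁻¹)` with a transvection produces every
transvection, and transvections generate `SL₂(k)`. Otherwise every scalar is `±1`, so
`z² = 1` on `Z` and squares of elements of `G ⊔ Z` lie in `G`; as `-1` is the square of the
Weyl element, `Z ≤ G`.
-/

open Matrix

variable (k : Type) [Field k] [Fintype k]

/-- The subgroup of scalar matrices in `GL₂(k)`. -/
def scalarSubgroup : Subgroup (GL (Fin 2) k) :=
  (Units.map ((Matrix.scalar (Fin 2) : k →+* Matrix (Fin 2) (Fin 2) k)).toMonoidHom).range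

instance scalarSubgroup_normal : (scalarSubgroup k).Normal := by
  constructor
  rintro x ⟨c, rfl⟩ g
  refine ⟨c, Units.ext ?_⟩
  have hc : Commute ((Matrix.scalar (Fin 2)) (c : k)) ((g : Matrix (Fin 2) (Fin 2) k)) :=
    Matrix.scalar_commute _ (fun r => Commute.all _ r) _
  push_cast
  calc ((Matrix.scalar (Fin 2)) (c : k) : Matrix (Fin 2) (Fin 2) k)
      = (Matrix.scalar (Fin 2)) (c : k) * ((g : Matrix (Fin 2) (Fin 2) k) * (↑g⁻¹)) := by
        rw [Units.mul_inv, mul_one]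
    _ = (g : Matrix (Fin 2) (Fin 2) k) * (Matrix.scalar (Fin 2)) (c : k) * (↑g⁻¹) := by
        rw [← mul_assoc, hc.eq]
  simp [Units.val_mul]

/-- `PGL₂(k)`: the quotient of `GL₂(k)` by its subgroup of scalar matrices. -/
abbrev PGL2 := GL (Fin 2) k ⧸ scalarSubgroup k

/-- The canonical projection `P : GL₂(k) → PGL₂(k)`. -/
def pglProj : GL (Fin 2) k →* PGL2 k := QuotientGroup.mk' (scalarSubgroup k)

/-- `SL₂(k)` as the subgroup of `GL₂(k)` of determinant-one matrices. -/
def SL2sub : Subgroup (GL (Fin 2) k) :=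
  MonoidHom.ker (Matrix.GeneralLinearGroup.det : GL (Fin 2) k →* kˣ)

open Subgroup Matrix.GeneralLinearGroup
open scoped commutatorElement

section CentralCommutators

variable {M : Type*} [Group M]

theorem commutatorElement_mul_mem_center {g h z w : M} (hz : z ∈ center M) (hw : w ∈ center M) :
    ⁅g * z, h * w⁆ = ⁅g, h⁆ := by
  have hz' : ∀ x, Commute z x := fun x => (mem_center_iff.mp hz x).symm
  have hw' : ∀ x, Commute w x := fun x => (mem_center_iff.mp hw x).symm
  calc ⁅g * z, h * w⁆ = g * (z * (h * w) * z⁻¹) * g⁻¹ * (h * w)⁻¹ := by group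
    _ = g * h * (w * g⁻¹ * w⁻¹) * h⁻¹ := by rw [(hz' _).mul_inv_cancel]; group
    _ = ⁅g, h⁆ := by rw [(hw' _).mul_inv_cancel, commutatorElement_def]

theorem commutatorElement_mem_of_mem_sup_center {G : Subgroup M} {u v : M}
    (hu : u ∈ G ⊔ center M) (hv : v ∈ G ⊔ center M) : ⁅u, v⁆ ∈ G := by
  obtain ⟨g, hg, z, hz, rfl⟩ := mem_sup_of_normal_right.mp hu
  obtain ⟨h, hh, w, hw, rfl⟩ := mem_sup_of_normal_right.mp hv
  rw [commutatorElement_mul_mem_center hz hw, commutatorElement_def]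
  exact mul_mem (mul_mem (mul_mem hg hh) (inv_mem hg)) (inv_mem hh)

theorem sq_mem_of_mem_sup_center {G : Subgroup M} (hM : ∀ z ∈ center M, z ^ 2 = 1) {u : M}
    (hu : u ∈ G ⊔ center M) : u ^ 2 ∈ G := by
  obtain ⟨g, hg, z, hz, rfl⟩ := mem_sup_of_normal_right.mp hu
  rw [Commute.mul_pow (mem_center_iff.mp hz g), hM z hz, mul_one]
  exact pow_mem hg 2

end CentralCommutators

namespace GL2

variable {K : Type*} [Field K]

def upperTransvection (x : K) : GL (Fin 2) K :=
  ⟨!![1, x; 0, 1], !![1, -x; 0, 1], by simp [Matrix.one_fin_two], by simp [Matrix.one_fin_two]⟩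

def lowerTransvection (y : K) : GL (Fin 2) K :=
  ⟨!![1, 0; y, 1], !![1, 0; -y, 1], by simp [Matrix.one_fin_two], by simp [Matrix.one_fin_two]⟩

def diagInv (a : Kˣ) : GL (Fin 2) K :=
  ⟨!![(a : K), 0; 0, (a⁻¹ : K)], !![(a⁻¹ : K), 0; 0, (a : K)], by simp [Matrix.one_fin_two],
    by simp [Matrix.one_fin_two]⟩

theorem upperTransvection_inv (x : K) : (upperTransvection x)⁻¹ = upperTransvection (-x) :=
  Units.ext (by simp [upperTransvection])

theorem lowerTransvection_inv (y : K) : (lowerTransvection y)⁻¹ = lowerTransvection (-y) :=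
  Units.ext (by simp [lowerTransvection])

theorem upperTransvection_mul (x x' : K) :
    upperTransvection x * upperTransvection x' = upperTransvection (x + x') :=
  Units.ext (by simp [upperTransvection, add_comm])

theorem lowerTransvection_mul (y y' : K) :
    lowerTransvection y * lowerTransvection y' = lowerTransvection (y + y') :=
  Units.ext (by simp [lowerTransvection])

theorem diagInv_mul_upperTransvection (a : Kˣ) (x : K) :
    diagInv a * upperTransvection x = upperTransvection (a ^ 2 * x) * diagInv a :=
  Units.ext (by simp [diagInv, upperTransvection]; field_simp)

theorem diagInv_inv_mul_lowerTransvection (a : Kˣ) (y : K) :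
    diagInv a⁻¹ * lowerTransvection y = lowerTransvection (a ^ 2 * y) * diagInv a⁻¹ :=
  Units.ext (by simp [diagInv, lowerTransvection]; field_simp)

theorem commutatorElement_diagInv_upperTransvection (a : Kˣ) (x : K) :
    ⁅diagInv a, upperTransvection x⁆ = upperTransvection ((a ^ 2 - 1) * x) := by
  rw [commutatorElement_def, diagInv_mul_upperTransvection, mul_inv_cancel_right,
    upperTransvection_inv, upperTransvection_mul]
  ring_nf

theorem commutatorElement_diagInv_inv_lowerTransvection (a : Kˣ) (y : K) :
    ⁅diagInv a⁻¹, lowerTransvection y⁆ = lowerTransvection ((a ^ 2 - 1) * y) := by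
  rw [commutatorElement_def, diagInv_inv_mul_lowerTransvection, mul_inv_cancel_right,
    lowerTransvection_inv, lowerTransvection_mul]
  ring_nf

theorem mem_ker_det_iff {g : GL (Fin 2) K} :
    g ∈ (det : GL (Fin 2) K →* Kˣ).ker ↔ (g : Matrix (Fin 2) (Fin 2) K).det = 1 := by
  rw [MonoidHom.mem_ker, Units.ext_iff, val_det_apply, Units.val_one]

theorem upperTransvection_mem_ker_det (x : K) :
    upperTransvection x ∈ (det : GL (Fin 2) K →* Kˣ).ker := by
  rw [mem_ker_det_iff]
  simp [upperTransvection]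

theorem lowerTransvection_mem_ker_det (y : K) :
    lowerTransvection y ∈ (det : GL (Fin 2) K →* Kˣ).ker := by
  rw [mem_ker_det_iff]
  simp [lowerTransvection]

theorem diagInv_mem_ker_det (a : Kˣ) : diagInv a ∈ (det : GL (Fin 2) K →* Kˣ).ker := by
  rw [mem_ker_det_iff]
  simp [diagInv]

theorem eq_upperTransvection_mul_lowerTransvection_mul_upperTransvection {s : GL (Fin 2) K}
    (hs : s ∈ (det : GL (Fin 2) K →* Kˣ).ker) (hc : s 1 0 ≠ 0) :
    s = upperTransvection ((s 0 0 - 1) / s 1 0) * lowerTransvection (s 1 0) *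
      upperTransvection ((s 1 1 - 1) / s 1 0) := by
  rw [mem_ker_det_iff, Matrix.det_fin_two] at hs
  ext i j
  fin_cases i <;> fin_cases j <;> simp [upperTransvection, lowerTransvection] <;> field_simp <;>
    first | ring1 | linear_combination -hs

theorem ker_det_le_of_transvection_mem {G : Subgroup (GL (Fin 2) K)}
    (hU : ∀ x, upperTransvection x ∈ G) (hL : ∀ y, lowerTransvection y ∈ G) :
    (det : GL (Fin 2) K →* Kˣ).ker ≤ G := by
  have mem_of_ne_zero : ∀ s ∈ (det : GL (Fin 2) K →* Kˣ).ker, s 1 0 ≠ 0 → s ∈ G := by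
    intro s hs hc
    rw [eq_upperTransvection_mul_lowerTransvection_mul_upperTransvection hs hc]
    exact mul_mem (mul_mem (hU _) (hL _)) (hU _)
  intro s hs
  by_cases hc : s 1 0 = 0
  · have hd : s 1 1 ≠ 0 := by
      rintro hd
      rw [mem_ker_det_iff, Matrix.det_fin_two, hc, hd] at hs
      simp at hs
    rw [← mul_mem_cancel_right (hL 1)]
    refine mem_of_ne_zero _ (mul_mem hs (lowerTransvection_mem_ker_det 1)) ?_
    simpa [lowerTransvection, Matrix.mul_apply, Fin.sum_univ_two, hc] using hd
  · exact mem_of_ne_zero s hs hc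

theorem ker_det_le_of_le_sup_center_of_sq_ne_one {G : Subgroup (GL (Fin 2) K)}
    (hG : (det : GL (Fin 2) K →* Kˣ).ker ≤ G ⊔ center (GL (Fin 2) K)) {a : Kˣ}
    (ha : (a : K) ^ 2 ≠ 1) : (det : GL (Fin 2) K →* Kˣ).ker ≤ G := by
  have ha' : (a : K) ^ 2 - 1 ≠ 0 := sub_ne_zero.mpr ha
  apply ker_det_le_of_transvection_mem
  · intro x
    rw [← mul_div_cancel₀ x ha', ← commutatorElement_diagInv_upperTransvection]
    exact commutatorElement_mem_of_mem_sup_center (hG (diagInv_mem_ker_det a))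
      (hG (upperTransvection_mem_ker_det _))
  · intro y
    rw [← mul_div_cancel₀ y ha', ← commutatorElement_diagInv_inv_lowerTransvection]
    exact commutatorElement_mem_of_mem_sup_center (hG (diagInv_mem_ker_det a⁻¹))
      (hG (lowerTransvection_mem_ker_det _))

def weylElement : GL (Fin 2) K :=
  ⟨!![0, -1; 1, 0], !![0, 1; -1, 0], by simp [Matrix.one_fin_two], by simp [Matrix.one_fin_two]⟩

theorem weylElement_mem_ker_det : weylElement ∈ (det : GL (Fin 2) K →* Kˣ).ker := by
  rw [mem_ker_det_iff]
  simp [weylElement]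

theorem center_le_of_forall_sq_eq_one (hK : ∀ a : Kˣ, (a : K) ^ 2 = 1)
    {G : Subgroup (GL (Fin 2) K)}
    (hG : (det : GL (Fin 2) K →* Kˣ).ker ≤ G ⊔ center (GL (Fin 2) K)) :
    center (GL (Fin 2) K) ≤ G := by
  have hsq : ∀ z ∈ center (GL (Fin 2) K), z ^ 2 = 1 := by
    rw [center_eq_range_scalar]
    rintro _ ⟨c, rfl⟩
    rw [← map_pow, show c ^ 2 = 1 from Units.ext (by simp [hK c]), map_one]
  rw [center_eq_range_scalar]
  rintro _ ⟨c, rfl⟩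
  rcases sq_eq_one_iff.mp (hK c) with hc | hc
  · rw [show c = 1 from Units.ext hc, map_one]
    exact one_mem G
  · rw [show scalar (Fin 2) c = weylElement ^ 2 by
      ext i j; fin_cases i <;> fin_cases j <;> simp [weylElement, hc, sq]]
    exact sq_mem_of_mem_sup_center hsq (hG weylElement_mem_ker_det)

theorem ker_det_le_of_le_sup_center {G : Subgroup (GL (Fin 2) K)}
    (hG : (det : GL (Fin 2) K →* Kˣ).ker ≤ G ⊔ center (GL (Fin 2) K)) :
    (det : GL (Fin 2) K →* Kˣ).ker ≤ G := by
  by_cases hK : ∀ a : Kˣ, (a : K) ^ 2 = 1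
  · rwa [sup_eq_left.mpr (center_le_of_forall_sq_eq_one hK hG)] at hG
  · obtain ⟨a, ha⟩ := not_forall.mp hK
    exact ker_det_le_of_le_sup_center_of_sq_ne_one hG ha

end GL2

/-- For a subgroup `G ≤ GL₂(k)` over a finite field `k`, the following are equivalent:
(1) `G` contains `SL₂(k)`; (2) the image of `G` in `PGL₂(k)` contains `PSL₂(k)`;
(3) `G = GL₂(k)_A` where `A = det(G)`. -/
theorem stmt_1 (G : Subgroup (GL (Fin 2) k)) :
    List.TFAE [SL2sub k ≤ G,
      Subgroup.map (pglProj k) (SL2sub k) ≤ Subgroup.map (pglProj k) G,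
      G = Subgroup.comap (Matrix.GeneralLinearGroup.det : GL (Fin 2) k →* kˣ)
            (Subgroup.map (Matrix.GeneralLinearGroup.det : GL (Fin 2) k →* kˣ) G)] := by
  have ker_pglProj : (pglProj k).ker = center (GL (Fin 2) k) :=
    (QuotientGroup.ker_mk' _).trans center_eq_range_scalar.symm
  tfae_have 1 → 2 := fun h => map_mono h
  tfae_have 2 → 1 := fun h => GL2.ker_det_le_of_le_sup_center (ker_pglProj ▸ map_le_map_iff.mp h)
  tfae_have 1 ↔ 3 := by rw [comap_map_eq, left_eq_sup]; rfl
  tfae_finish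
end

section
/- The trace lemma fails for the fields with 2, 3, and 5 elements: for each q ∈ {2, 3, 5} there exists a proper subgroup G ⊊ SL₂(𝔽_q) whose set of traces {tr g : g ∈ G} equals all of 𝔽_q. (Witnesses: a cyclic subgroup of order 3 in SL₂(𝔽₂), the quaternion subgroup Q₈ ≤ SL₂(𝔽₃), and a subgroup of SL₂(𝔽₅) isomorphic to SL₂(𝔽₃).) -/
/-!
For `q = 2, 3` take the centralizer of a generator `a` of a nonsplit torus, which is cyclic of
order `q + 1`: the traces of `1, a, …, a^q` already run through all of `𝔽_q`. For `q = 5` the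
torus, cyclic of order `6`, misses the trace `0` of the elements of order `4`; its normalizer,
dicyclic of order `12`, contains such elements, namely those inverting `a`. Each subgroup is
proper because some matrix fails to commute with `a`, resp. conjugates `a` out of its centralizer.
-/

open Matrix Subgroup
open scoped MatrixGroups

namespace Subgroup

variable {G : Type*} [Group G] {a b g : G}

theorem centralizer_singleton_ne_top (h : ¬Commute b a) : centralizer {a} ≠ ⊤ :=
  fun htop => h (mem_centralizer_singleton_iff.1 (htop ▸ mem_top b))

theorem mem_normalizer_centralizer_singleton_of_conj_eq_inv (h : g * a * g⁻¹ = a⁻¹) :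
    g ∈ normalizer (centralizer {a} : Set G) := by
  have ha : g * a⁻¹ * g⁻¹ = a := by simpa [mul_assoc] using congrArg (·⁻¹) h
  refine mem_normalizer_iff.2 fun k => ?_
  simp only [mem_centralizer_singleton_iff]
  calc Commute k a ↔ Commute k a⁻¹ := Commute.inv_right_iff.symm
    _ ↔ Commute (g * k * g⁻¹) (g * a⁻¹ * g⁻¹) := (Commute.conj_iff g).symm
    _ ↔ Commute (g * k * g⁻¹) a := by rw [ha]

theorem normalizer_centralizer_singleton_ne_top (h : ¬Commute (b * a * b⁻¹) a) :
    normalizer (centralizer {a} : Set G) ≠ ⊤ := fun htop =>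
  h <| mem_centralizer_singleton_iff.1 <|
    (mem_normalizer_iff.1 (htop ▸ mem_top b) a).1 (mem_centralizer_singleton_iff.2 rfl)

end Subgroup

section traceSet

variable {n R : Type*} [Fintype n] [DecidableEq n] [CommRing R]

def traceSet (G : Subgroup (SpecialLinearGroup n R)) : Set R :=
  {t | ∃ s ∈ G, trace (s : Matrix n n R) = t}

theorem traceSet_eq_univ_of_forall_mem_map {G : Subgroup (SpecialLinearGroup n R)}
    (l : List (SpecialLinearGroup n R)) (hl : ∀ s ∈ l, s ∈ G)
    (h : ∀ t : R, t ∈ l.map fun s : SpecialLinearGroup n R => trace (s : Matrix n n R)) :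
    traceSet G = Set.univ :=
  Set.eq_univ_of_forall fun t => by
    obtain ⟨s, hs, rfl⟩ := List.mem_map.1 (h t)
    exact ⟨s, hl s hs, rfl⟩

end traceSet

theorem exists_ne_top_traceSet_eq_univ_zmod_two :
    ∃ G : Subgroup SL(2, ZMod 2), G ≠ ⊤ ∧ traceSet G = Set.univ := by
  set A : SL(2, ZMod 2) := ⟨!![0, 1; 1, 1], by decide⟩
  have hA : A ∈ centralizer {A} := mem_centralizer_singleton_iff.2 rfl
  refine ⟨_, centralizer_singleton_ne_top (a := A) (b := ⟨!![0, 1; 1, 0], by decide⟩)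
    (by unfold Commute SemiconjBy; decide), ?_⟩
  exact traceSet_eq_univ_of_forall_mem_map [1, A] (by simp [hA]) (by decide)

theorem exists_ne_top_traceSet_eq_univ_zmod_three :
    ∃ G : Subgroup SL(2, ZMod 3), G ≠ ⊤ ∧ traceSet G = Set.univ := by
  set A : SL(2, ZMod 3) := ⟨!![0, 2; 1, 0], by decide⟩
  have hA : A ∈ centralizer {A} := mem_centralizer_singleton_iff.2 rfl
  refine ⟨_, centralizer_singleton_ne_top (a := A) (b := ⟨!![1, 1; 0, 1], by decide⟩)
    (by unfold Commute SemiconjBy; decide), ?_⟩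
  exact traceSet_eq_univ_of_forall_mem_map [1, A, A ^ 2] (by simp [hA, pow_mem hA]) (by decide)

theorem exists_ne_top_traceSet_eq_univ_zmod_five :
    ∃ G : Subgroup SL(2, ZMod 5), G ≠ ⊤ ∧ traceSet G = Set.univ := by
  set A : SL(2, ZMod 5) := ⟨!![0, 4; 1, 1], by decide⟩
  set X : SL(2, ZMod 5) := ⟨!![0, 2; 2, 0], by decide⟩
  have hA : A ∈ normalizer (centralizer {A} : Set SL(2, ZMod 5)) :=
    le_normalizer (mem_centralizer_singleton_iff.2 rfl)
  have hX := mem_normalizer_centralizer_singleton_of_conj_eq_inv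
    (show X * A * X⁻¹ = A⁻¹ by decide)
  refine ⟨_, normalizer_centralizer_singleton_ne_top (a := A)
    (b := ⟨!![0, 1; 4, 0], by decide⟩) (by unfold Commute SemiconjBy; decide), ?_⟩
  exact traceSet_eq_univ_of_forall_mem_map [X, A, 1, A ^ 2, A ^ 3]
    (by simp [hX, hA, pow_mem hA]) (by decide)

/-- The trace lemma fails for the fields with 2, 3 and 5 elements: for each
`q ∈ {2, 3, 5}` there is a proper subgroup of `SL₂(𝔽_q)` whose set of traces is all
of `𝔽_q`. -/
theorem stmt_5 :
    (∃ G : Subgroup (Matrix.SpecialLinearGroup (Fin 2) (ZMod 2)), G ≠ ⊤ ∧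
      {t : ZMod 2 | ∃ s ∈ G, Matrix.trace (s : Matrix (Fin 2) (Fin 2) (ZMod 2)) = t} =
        Set.univ) ∧
    (∃ G : Subgroup (Matrix.SpecialLinearGroup (Fin 2) (ZMod 3)), G ≠ ⊤ ∧
      {t : ZMod 3 | ∃ s ∈ G, Matrix.trace (s : Matrix (Fin 2) (Fin 2) (ZMod 3)) = t} =
        Set.univ) ∧
    (∃ G : Subgroup (Matrix.SpecialLinearGroup (Fin 2) (ZMod 5)), G ≠ ⊤ ∧
      {t : ZMod 5 | ∃ s ∈ G, Matrix.trace (s : Matrix (Fin 2) (Fin 2) (ZMod 5)) = t} =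
        Set.univ) := by
  exact ⟨exists_ne_top_traceSet_eq_univ_zmod_two, exists_ne_top_traceSet_eq_univ_zmod_three,
    exists_ne_top_traceSet_eq_univ_zmod_five⟩
end

section
/- If G ≤ GL₂(𝔽₅) is a subgroup such that the set of characteristic polynomials {charpoly(g) : g ∈ G} equals the set of characteristic polynomials of all elements of GL₂(𝔽₅), then G = GL₂(𝔽₅). -/
/-!
`G` contains an element `a` with characteristic polynomial `(X - 2)(X - 4)` and an element `b`
with the irreducible characteristic polynomial `X² - 2X + 3`. Conjugating simultaneously, `a`
becomes `diag(2, 4)`; a further diagonal conjugation makes the lower left entry of `b` equal to `1`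
(it is nonzero because `b` has no eigenvector), which leaves five possibilities for `b`. In each
of them explicit words in `a` and `b` give the two elementary transvections, and these together
with `diag(2, 4)` generate all transvections and all invertible diagonal matrices, hence `GL₂(𝔽₅)`.
-/

open Matrix

namespace Matrix

section CommRing

variable {n R : Type*} [Fintype n] [DecidableEq n] [CommRing R]

theorem trace_eq_of_charpoly_eq [Nonempty n] {A B : Matrix n n R} (h : A.charpoly = B.charpoly) :
    A.trace = B.trace := by
  rw [trace_eq_neg_charpoly_coeff, trace_eq_neg_charpoly_coeff, h]

theorem det_eq_of_charpoly_eq {A B : Matrix n n R} (h : A.charpoly = B.charpoly) :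
    A.det = B.det := by
  rw [det_eq_sign_charpoly_coeff, det_eq_sign_charpoly_coeff, h]

theorem transvection_natCast_mem {S : Submonoid (Matrix n n R)} {i j : n} (hij : i ≠ j)
    (h : transvection i j 1 ∈ S) (k : ℕ) : transvection i j (k : R) ∈ S := by
  induction k with
  | zero => simp [S.one_mem]
  | succ k ih =>
    rw [Nat.cast_succ, ← transvection_mul_transvection_same (h := hij)]
    exact S.mul_mem ih h

end CommRing

theorem GeneralLinearGroup.eq_top_of_diagonal_transvection_mem {n 𝕜 : Type*} [Fintype n]
    [DecidableEq n] [Field 𝕜] {T : Subgroup (GL n 𝕜)}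
    (hdiag : ∀ d : n → 𝕜, (diagonal d).det ≠ 0 → diagonal d ∈ T.toSubmonoid.map (Units.coeHom _))
    (htrans : ∀ t : TransvectionStruct n 𝕜, t.toMatrix ∈ T.toSubmonoid.map (Units.coeHom _)) :
    T = ⊤ := by
  refine eq_top_iff.2 fun g _ => ?_
  obtain ⟨g', hg', hg'g⟩ := diagonal_transvection_induction_of_det_ne_zero
    (· ∈ T.toSubmonoid.map (Units.coeHom _)) g g.det_ne_zero hdiag htrans
    fun _ _ _ _ => mul_mem
  exact Units.ext hg'g ▸ hg'

end Matrix

local notation "M₂" => Matrix (Fin 2) (Fin 2) (ZMod 5)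

namespace GL2F5

local instance fact_prime_five : Fact (Nat.Prime 5) := ⟨by norm_num⟩

def D : M₂ := diagonal ![2, 4]

/-- The matrices of trace `2`, determinant `3` and lower left entry `1`. -/
def B (x : ZMod 5) : M₂ := !![x, x * (2 - x) - 3; 1, 2 - x]

theorem transvection_mem {S : Submonoid M₂} (hU : transvection 0 1 1 ∈ S)
    (hL : transvection 1 0 1 ∈ S) (t : TransvectionStruct (Fin 2) (ZMod 5)) : t.toMatrix ∈ S := by
  obtain ⟨i, j, hij, c⟩ := t
  rw [TransvectionStruct.toMatrix_mk, ← ZMod.natCast_zmod_val c]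
  fin_cases i <;> fin_cases j
  · exact absurd rfl hij
  · exact transvection_natCast_mem hij hU _
  · exact transvection_natCast_mem hij hL _
  · exact absurd rfl hij

theorem diagonal_mem {S : Submonoid M₂} (hD : D ∈ S) (hU : transvection 0 1 1 ∈ S)
    (hL : transvection 1 0 1 ∈ S) {d : Fin 2 → ZMod 5} (hd : det (diagonal d) ≠ 0) :
    diagonal d ∈ S := by
  -- the product of transvections is `diag(2, 3)`, which together with `D` generates the torus
  have key : ∀ d : Fin 2 → ZMod 5, det (diagonal d) ≠ 0 → ∃ i < 4, ∃ j < 4,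
      diagonal d = D ^ i * (transvection 0 1 1 * transvection 1 0 1 * transvection 0 1 1 ^ 2 *
        transvection 1 0 1 ^ 3) ^ j := by
    decide +kernel
  obtain ⟨i, -, j, -, hij⟩ := key d hd
  rw [hij]
  aesop

theorem transvection_one_mem {S : Submonoid M₂} {x : ZMod 5} (hD : D ∈ S) (hB : B x ∈ S) :
    transvection 0 1 1 ∈ S ∧ transvection 1 0 1 ∈ S := by
  have hx : ∀ y : ZMod 5, y = 0 ∨ y = 1 ∨ y = 2 ∨ y = 3 ∨ y = 4 := by decide
  rcases hx x with rfl | rfl | rfl | rfl | rfl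
  -- the words were found by a breadth-first search in the monoid generated by `D` and `B x`
  on_goal 1 =>
    rw [show transvection 0 1 1 = D ^ 3 * B 0 * D * B 0 ^ 2 * D by decide +kernel,
      show transvection 1 0 1 = D ^ 2 * B 0 ^ 2 * D * B 0 * D ^ 2 by decide +kernel]
  on_goal 2 =>
    rw [show transvection 0 1 1 = D ^ 3 * B 1 * D * B 1 ^ 2 * D ^ 3 * B 1 * D by decide +kernel,
      show transvection 1 0 1 = B 1 * D ^ 3 * B 1 ^ 2 * D * B 1 by decide +kernel]
  on_goal 3 =>
    rw [show transvection 0 1 1 = B 2 * D ^ 3 * B 2 * D * B 2 ^ 2 by decide +kernel,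
      show transvection 1 0 1 = B 2 * D ^ 3 * B 2 * D * B 2 * D by decide +kernel]
  on_goal 4 =>
    rw [show transvection 0 1 1 = D * B 3 ^ 3 * D * B 3 ^ 2 * D by decide +kernel,
      show transvection 1 0 1 = D ^ 3 * B 3 ^ 2 * D * B 3 ^ 3 * D ^ 3 by decide +kernel]
  on_goal 5 =>
    rw [show transvection 0 1 1 = D ^ 3 * B 4 ^ 3 * D ^ 2 * B 4 * D ^ 2 * B 4 by decide +kernel,
      show transvection 1 0 1 = D ^ 2 * B 4 * D ^ 2 * B 4 * D ^ 2 * B 4 ^ 3 * D by decide +kernel]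
  all_goals constructor <;> repeat (first | apply pow_mem | apply mul_mem | assumption)

theorem exists_mul_eq_mul_D :
    ∀ a : M₂, a.trace = 1 → a.det = 3 → ∃ P : M₂, P.det ≠ 0 ∧ a * P = P * D := by
  decide +kernel

theorem lower_left_ne_zero {m : M₂} (htr : m.trace = 2) (hdet : m.det = 3) : m 1 0 ≠ 0 := by
  intro h
  rw [trace_fin_two] at htr
  rw [det_fin_two, h, mul_zero, sub_zero, eq_sub_of_add_eq' htr] at hdet
  have : ∀ t : ZMod 5, t * (2 - t) ≠ 3 := by decide
  exact this _ hdet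

theorem mul_diagonal_eq_diagonal_mul_B {m : M₂} (htr : m.trace = 2) (hdet : m.det = 3) :
    m * diagonal ![1, m 1 0] = diagonal ![1, m 1 0] * B (m 0 0) := by
  rw [trace_fin_two] at htr
  rw [det_fin_two] at hdet
  ext i j
  fin_cases i <;> fin_cases j <;> simp only [B, mul_apply, Fin.sum_univ_two,
    Fin.zero_eta, Fin.mk_one, Fin.isValue, diagonal_apply_eq, diagonal_apply_ne, ne_eq, one_ne_zero,
    zero_ne_one, not_false_eq_true, of_apply, cons_val', cons_val_zero, cons_val_one,
    cons_val_fin_one, mul_one, one_mul, mul_zero, zero_mul, add_zero, zero_add]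
  · linear_combination m 0 0 * htr - hdet
  · linear_combination m 1 0 * htr

theorem exists_mul_eq_mul_D_and_B {a b : GL (Fin 2) (ZMod 5)} (hatr : (a : M₂).trace = 1)
    (hadet : (a : M₂).det = 3) (hbtr : (b : M₂).trace = 2) (hbdet : (b : M₂).det = 3) :
    ∃ R : GL (Fin 2) (ZMod 5), ∃ x, (a : M₂) * R = R * D ∧ (b : M₂) * R = R * B x := by
  obtain ⟨P, hP, haP⟩ := exists_mul_eq_mul_D a hatr hadet
  obtain ⟨P, rfl⟩ : ∃ P' : GL (Fin 2) (ZMod 5), (P' : M₂) = P :=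
    ⟨_, GeneralLinearGroup.val_mkOfDetNeZero P hP⟩
  set m : M₂ := ((P⁻¹ : GL (Fin 2) (ZMod 5)) : M₂) * b * P with hm
  have hmtr : m.trace = 2 := by rw [hm, trace_units_conj', hbtr]
  have hmdet : m.det = 3 := by rw [hm, det_units_conj', hbdet]
  obtain ⟨Q, hQ⟩ : ∃ Q : GL (Fin 2) (ZMod 5), (Q : M₂) = diagonal ![1, m 1 0] :=
    ⟨_, GeneralLinearGroup.val_mkOfDetNeZero _ (by simp [lower_left_ne_zero hmtr hmdet])⟩
  refine ⟨P * Q, m 0 0, ?_, ?_⟩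
  · have hDQ : D * Q = Q * D := by
      simp only [hQ, D, diagonal_mul_diagonal, mul_comm]
    rw [Units.val_mul, ← mul_assoc, haP, mul_assoc, hDQ, mul_assoc]
  · have hbP : (b : M₂) * P = P * m := by
      rw [hm, ← mul_assoc, ← mul_assoc, Units.mul_inv, one_mul]
    rw [Units.val_mul, ← mul_assoc, hbP, mul_assoc, hQ, mul_diagonal_eq_diagonal_mul_B hmtr hmdet,
      mul_assoc]

theorem eq_top_of_mem {T : Subgroup (GL (Fin 2) (ZMod 5))} {d b : GL (Fin 2) (ZMod 5)} {x : ZMod 5}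
    (hd : d ∈ T) (hb : b ∈ T) (hdD : (d : M₂) = D) (hbB : (b : M₂) = B x) : T = ⊤ := by
  have hD : D ∈ T.toSubmonoid.map (Units.coeHom M₂) := ⟨d, hd, (Units.coeHom_apply d).trans hdD⟩
  have hB : B x ∈ T.toSubmonoid.map (Units.coeHom M₂) := ⟨b, hb, (Units.coeHom_apply b).trans hbB⟩
  obtain ⟨hU, hL⟩ := transvection_one_mem hD hB
  exact GeneralLinearGroup.eq_top_of_diagonal_transvection_mem (fun _ => diagonal_mem hD hU hL)
    (transvection_mem hU hL)

theorem eq_top_of_forall_exists_charpoly_eq {G : Subgroup (GL (Fin 2) (ZMod 5))}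
    (hG : ∀ g : GL (Fin 2) (ZMod 5), ∃ g' ∈ G, (g' : M₂).charpoly = (g : M₂).charpoly) :
    G = ⊤ := by
  obtain ⟨a, haG, ha⟩ := hG (GeneralLinearGroup.mkOfDetNeZero D (by decide +kernel))
  obtain ⟨b, hbG, hb⟩ := hG (GeneralLinearGroup.mkOfDetNeZero (B 0) (by decide +kernel))
  rw [GeneralLinearGroup.val_mkOfDetNeZero] at ha hb
  obtain ⟨R, x, haR, hbR⟩ := exists_mul_eq_mul_D_and_B
    (by rw [trace_eq_of_charpoly_eq ha]; decide +kernel)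
    (by rw [det_eq_of_charpoly_eq ha]; decide +kernel)
    (by rw [trace_eq_of_charpoly_eq hb]; decide +kernel)
    (by rw [det_eq_of_charpoly_eq hb]; decide +kernel)
  have hT : G.comap (MulAut.conj R).toMonoidHom = ⊤ := by
    refine eq_top_of_mem (d := R⁻¹ * a * R) (b := R⁻¹ * b * R) ?_ ?_
      (by rw [Units.val_mul, Units.val_mul, mul_assoc, Units.inv_mul_eq_iff_eq_mul, haR])
      (by rw [Units.val_mul, Units.val_mul, mul_assoc, Units.inv_mul_eq_iff_eq_mul, hbR])
    · simpa [mul_assoc] using haG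
    · simpa [mul_assoc] using hbG
  refine eq_top_iff.2 fun g _ => ?_
  have hg : R⁻¹ * g * R ∈ G.comap (MulAut.conj R).toMonoidHom := hT ▸ Subgroup.mem_top _
  simpa [mul_assoc] using hg

end GL2F5

/-- If a subgroup `G ≤ GL₂(𝔽₅)` realizes exactly the same set of characteristic
polynomials as all of `GL₂(𝔽₅)`, then `G = GL₂(𝔽₅)`. -/
theorem stmt_7 (G : Subgroup (GL (Fin 2) (ZMod 5)))
    (h : {p : Polynomial (ZMod 5) | ∃ g ∈ G,
            Matrix.charpoly (g : Matrix (Fin 2) (Fin 2) (ZMod 5)) = p} =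
          {p : Polynomial (ZMod 5) | ∃ g : GL (Fin 2) (ZMod 5),
            Matrix.charpoly (g : Matrix (Fin 2) (Fin 2) (ZMod 5)) = p}) :
    G = ⊤ := by
  refine GL2F5.eq_top_of_forall_exists_charpoly_eq fun g => ?_
  have : (g : M₂).charpoly ∈ {p | ∃ g' ∈ G, (g' : M₂).charpoly = p} := h ▸ ⟨g, rfl⟩
  exact this
end
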